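/- arXiv:math/0306119 — 2 statements merged into one kernel-verified Lean document; each statement's English description precedes it below -/
import Mathlib

section
/- Fix 2 ≤ k ≤ r. There exist a constant c > 0 and n₀ such that for all n ≥ n₀, |β(n,r,k) − α^(r−k+1)·C(n,k−1)| ≤ c·n^(k−2), where C(·,·) denotes the binomial coefficient; that is, β(n,r,k) = α^(r−k+1)·C(n,k−1) + O(n^(k−2)). -/
open Finset

/-- The ground set `[n] = {1, …, n}`. -/
def grd (n : ℕ) : Finset ℕ := Finset.Icc 1 n

/-- `[n]^(k)`: all `k`-element subsets of `[n]`. -/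
def ksets (n k : ℕ) : Finset (Finset ℕ) := (grd n).powersetCard k

/-- A family of sets is intersecting if any two of its members meet. -/
def IsIntersecting (𝒜 : Finset (Finset ℕ)) : Prop :=
  ∀ A ∈ 𝒜, ∀ B ∈ 𝒜, (A ∩ B).Nonempty

/-- `𝒜⟨k⟩`: the collection of `k`-sets arising as pairwise intersections of members of `𝒜`. -/
def interk (𝒜 : Finset (Finset ℕ)) (k : ℕ) : Finset (Finset ℕ) :=
  ((𝒜 ×ˢ 𝒜).image fun p => p.1 ∩ p.2).filter fun C => C.card = k

/-- `𝒜⟨1⟩` identified with a set of points: all `x` with `{x} = A ∩ B` for some `A, B ∈ 𝒜`. -/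
def interPts (𝒜 : Finset (Finset ℕ)) : Finset ℕ :=
  (interk 𝒜 1).sup id

/-- `β(n,r,k)`: the maximum of `|𝒜⟨k⟩|` over intersecting families `𝒜 ⊆ [n]^(r)`. -/
noncomputable def beta (n r k : ℕ) : ℕ :=
  sSup {m | ∃ 𝒜 ⊆ ksets n r, IsIntersecting 𝒜 ∧ (interk 𝒜 k).card = m}

/-- `α^(r) = max {β(n,r,1) : n ≥ r}` (finite by Lovász's theorem). -/
noncomputable def alpha (r : ℕ) : ℕ :=
  sSup {m | ∃ n, r ≤ n ∧ beta n r 1 = m}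

/-!
Upper bound. By the Erdős–Rado sunflower lemma, an intersecting family of `r`-sets has only
boundedly many pairwise disjoint intersections, so a set `S` of size `O_r(1)` meets every
intersection of size `< r`. A `k`-intersection `C` either has two points in `S` (at most
`|S|² C(n, k-2)` such `C`) or contains a `(k-1)`-set `D` avoiding `S`; then the link of `D` is
intersecting (two members of the family meeting exactly in `D` would give an intersection
missing `S`), `C \ D` is one of its at most `α^(r-k+1)` singleton intersections, and there are
`C(n, k-1)` choices of `D`.

Lower bound. Take an extremal family for `α^(r-k+1)` on `[m]` and glue to each of its members
every `(k-1)`-subset of `{m+1, …, n}`; this gives `α^(r-k+1) C(n-m, k-1)` distinct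
`k`-intersections, and `C(n, k-1) - C(n-m, k-1) ≤ m C(n, k-2)`.
-/

open scoped Nat

namespace Finset

variable {α ι : Type*} [DecidableEq α]

theorem card_le_card_of_pairwiseDisjoint_of_inter_nonempty {s : Finset ι} {f : ι → Finset α}
    {B : Finset α} (hs : (s : Set ι).PairwiseDisjoint f) (hB : ∀ i ∈ s, (B ∩ f i).Nonempty) :
    #s ≤ #B :=
  calc #s ≤ #(s.biUnion fun i => B ∩ f i) :=
        card_le_card_biUnion (hs.mono fun _ => inter_subset_right) hB
    _ ≤ #B := card_le_card (biUnion_subset.mpr fun _ _ => inter_subset_left)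

theorem exists_pairwiseDisjoint_meeting_all (P : Finset (Finset α)) :
    ∃ 𝒞 ⊆ P, (𝒞 : Set (Finset α)).PairwiseDisjoint id ∧
      ∀ X ∈ P, X.Nonempty → ¬Disjoint X (𝒞.biUnion id) := by
  classical
  set 𝔇 := P.powerset.filter fun 𝒞 : Finset (Finset α) =>
    (𝒞 : Set (Finset α)).PairwiseDisjoint id
  obtain ⟨𝒞, h𝒞, hmax⟩ := exists_max_image 𝔇 card ⟨∅, by simp [𝔇]⟩
  rw [mem_filter, mem_powerset] at h𝒞
  refine ⟨𝒞, h𝒞.1, h𝒞.2, fun X hX hXne hdisj => ?_⟩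
  have hX𝒞 : X ∉ 𝒞 := fun hX𝒞 =>
    hXne.ne_empty (disjoint_self.mp (hdisj.mono_right (subset_biUnion_of_mem id hX𝒞)))
  have hins : insert X 𝒞 ∈ 𝔇 := by
    rw [mem_filter, mem_powerset, coe_insert]
    refine ⟨insert_subset hX h𝒞.1, h𝒞.2.insert fun C hC _ => ?_⟩
    exact hdisj.mono_right (subset_biUnion_of_mem id hC)
  have := hmax _ hins
  rw [card_insert_of_notMem hX𝒞] at this
  omega

theorem union_injOn_of_disjoint {X Y : Finset α} (h : Disjoint X Y) :
    Set.InjOn (fun p : Finset α × Finset α => p.1 ∪ p.2) {p | p.1 ⊆ X ∧ p.2 ⊆ Y} := by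
  have hrecover : ∀ P Q : Finset α, P ⊆ X → Q ⊆ Y → (P ∪ Q) ∩ X = P ∧ (P ∪ Q) ∩ Y = Q :=
    fun P Q hP hQ => by
      rw [union_inter_distrib_right, union_inter_distrib_right, inter_eq_left.mpr hP,
        inter_eq_left.mpr hQ, disjoint_iff_inter_eq_empty.mp (h.symm.mono_left hQ),
        disjoint_iff_inter_eq_empty.mp (h.mono_left hP), union_empty, empty_union]
      exact ⟨rfl, rfl⟩
  rintro ⟨P, Q⟩ ⟨hP, hQ⟩ ⟨P', Q'⟩ ⟨hP', hQ'⟩ hPQ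
  obtain ⟨h1, h2⟩ := hrecover P Q hP hQ
  obtain ⟨h1', h2'⟩ := hrecover P' Q' hP' hQ'
  exact Prod.ext (h1.symm.trans ((congrArg (· ∩ X) hPQ).trans h1'))
    (h2.symm.trans ((congrArg (· ∩ Y) hPQ).trans h2'))

theorem card_powersetCard_filter_one_lt_card_inter_le (U S : Finset α) (j : ℕ) :
    #{C ∈ U.powersetCard (j + 2) | 1 < #(C ∩ S)} ≤ #S ^ 2 * (#U).choose j := by
  calc #{C ∈ U.powersetCard (j + 2) | 1 < #(C ∩ S)}
      ≤ #((S ×ˢ S).biUnion fun p => (U.powersetCard j).image (insert p.1 ∘ insert p.2)) := by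
        refine card_le_card fun C hC => ?_
        obtain ⟨hC, hCS⟩ := mem_filter.mp hC
        obtain ⟨hCU, hCj⟩ := mem_powersetCard.mp hC
        obtain ⟨a, ha, b, hb, hab⟩ := one_lt_card.mp hCS
        have hbC : b ∈ C.erase a := mem_erase.mpr ⟨Ne.symm hab, (mem_inter.mp hb).1⟩
        refine mem_biUnion.mpr ⟨(a, b), mem_product.mpr ⟨(mem_inter.mp ha).2, (mem_inter.mp hb).2⟩,
          mem_image.mpr ⟨(C.erase a).erase b, mem_powersetCard.mpr ⟨?_, ?_⟩, ?_⟩⟩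
        · exact (erase_subset _ _).trans ((erase_subset _ _).trans hCU)
        · rw [card_erase_of_mem hbC, card_erase_of_mem (mem_inter.mp ha).1, hCj]; rfl
        · simp only [Function.comp, insert_erase hbC, insert_erase (mem_inter.mp ha).1]
    _ ≤ #(S ×ˢ S) * (#U).choose j := card_biUnion_le_card_mul _ _ _ fun _ _ =>
        card_image_le.trans (card_powersetCard j U).le
    _ = #S ^ 2 * (#U).choose j := by rw [card_product, sq]

def IsSunflower (𝒯 : Finset (Finset α)) (Y : Finset α) : Prop :=
  ∀ A ∈ 𝒯, ∀ B ∈ 𝒯, A ≠ B → A ∩ B = Y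

namespace IsSunflower

variable {𝒯 : Finset (Finset α)} {Y : Finset α}

theorem kernel_subset (h : IsSunflower 𝒯 Y) (h𝒯 : 1 < #𝒯) {A : Finset α} (hA : A ∈ 𝒯) :
    Y ⊆ A := by
  obtain ⟨B, hB, hBA⟩ := exists_mem_ne h𝒯 A
  exact h A hA B hB hBA.symm ▸ inter_subset_left

theorem pairwiseDisjoint_sdiff (h : IsSunflower 𝒯 Y) :
    (𝒯 : Set (Finset α)).PairwiseDisjoint (· \ Y) := by
  intro A hA B hB hAB
  rw [Function.onFun, disjoint_left]
  intro x hxA hxB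
  rw [mem_sdiff] at hxA hxB
  exact hxA.2 (h A hA B hB hAB ▸ mem_inter.mpr ⟨hxA.1, hxB.1⟩)

theorem inter_kernel_nonempty (h : IsSunflower 𝒯 Y) {B : Finset α} (hB𝒯 : #B < #𝒯)
    (hB : ∀ A ∈ 𝒯, (B ∩ A).Nonempty) : (B ∩ Y).Nonempty := by
  obtain ⟨A, hA, hBA⟩ : ∃ A ∈ 𝒯, ¬(B ∩ (A \ Y)).Nonempty := by
    by_contra! hall
    exact (card_le_card_of_pairwiseDisjoint_of_inter_nonempty h.pairwiseDisjoint_sdiff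
      hall).not_gt hB𝒯
  obtain ⟨x, hx⟩ := hB A hA
  refine ⟨x, mem_inter.mpr ⟨(mem_inter.mp hx).1, ?_⟩⟩
  by_contra hxY
  exact hBA ⟨x, mem_inter.mpr ⟨(mem_inter.mp hx).1, mem_sdiff.mpr ⟨(mem_inter.mp hx).2, hxY⟩⟩⟩

theorem image_insert (h : IsSunflower 𝒯 Y) (x : α) :
    IsSunflower (𝒯.image (insert x)) (insert x Y) := by
  simp only [IsSunflower, mem_image]
  rintro _ ⟨A, hA, rfl⟩ _ ⟨B, hB, rfl⟩ hAB
  rw [← insert_inter_distrib, h A hA B hB (fun h => hAB (h ▸ rfl))]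

end IsSunflower

theorem isSunflower_empty_of_pairwiseDisjoint {𝒯 : Finset (Finset α)}
    (h : (𝒯 : Set (Finset α)).PairwiseDisjoint id) : IsSunflower 𝒯 ∅ :=
  fun _ hA _ hB hAB => disjoint_iff_inter_eq_empty.mp (h hA hB hAB)

theorem exists_isSunflower_of_link {S : Finset (Finset α)} {x : α} {p : ℕ}
    (hx : ∀ A ∈ S, x ∈ A)
    (hlink : ∃ T ⊆ S.image (·.erase x), p < #T ∧ ∃ Y, IsSunflower T Y) :
    ∃ T ⊆ S, p < #T ∧ ∃ Y, IsSunflower T Y := by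
  obtain ⟨T, hTS, hpT, Y, hY⟩ := hlink
  have hxT : ∀ B ∈ T, x ∉ B := fun B hB => by
    obtain ⟨A, -, rfl⟩ := mem_image.mp (hTS hB)
    exact notMem_erase x A
  refine ⟨T.image (insert x), fun A hA => ?_, ?_, insert x Y, hY.image_insert x⟩
  · obtain ⟨B, hB, rfl⟩ := mem_image.mp hA
    obtain ⟨A', hA', rfl⟩ := mem_image.mp (hTS hB)
    rwa [insert_erase (hx A' hA')]
  · rwa [card_image_of_injOn fun B hB C hC hBC => by
      rw [← erase_insert (hxT B hB), ← erase_insert (hxT C hC)]; exact congrArg (·.erase x) hBC]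

/-- The Erdős–Rado sunflower lemma. -/
theorem exists_isSunflower (p : ℕ) :
    ∀ (r : ℕ) (S : Finset (Finset α)), (∀ A ∈ S, #A = r) → r ! * p ^ r < #S →
      ∃ T ⊆ S, p < #T ∧ ∃ Y, IsSunflower T Y := by
  intro r
  induction r with
  | zero =>
    intro S hS hcard
    have : #S ≤ 1 := card_le_one.mpr fun A hA B hB => by
      rw [card_eq_zero.mp (hS A hA), card_eq_zero.mp (hS B hB)]
    simp at hcard
    omega
  | succ r ih =>
    intro S hS hcard
    obtain ⟨M, hMS, hMdisj, hMmeet⟩ := exists_pairwiseDisjoint_meeting_all S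
    by_cases hpM : p < #M
    · exact ⟨M, hMS, hpM, ∅, isSunflower_empty_of_pairwiseDisjoint hMdisj⟩
    -- Otherwise the `≤ p` disjoint sets of `M` cover at most `p (r + 1)` points, all members of
    -- `S` meet them, and some point lies in more than `r! p^r` members of `S`.
    have hV : #(M.biUnion id) ≤ p * (r + 1) :=
      (card_biUnion_le_card_mul M id (r + 1) fun A hA => (hS A (hMS hA)).le).trans
        (Nat.mul_le_mul_right _ (not_lt.mp hpM))
    have hpick : ∀ A ∈ S, ∃ x, x ∈ A ∧ x ∈ M.biUnion id := fun A hA => by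
      have hAne : A.Nonempty := card_pos.mp (by rw [hS A hA]; omega)
      simpa [not_disjoint_iff] using hMmeet A hA hAne
    obtain ⟨A₀, hA₀⟩ := card_pos.mp (Nat.zero_lt_of_lt hcard)
    have : Nonempty α := ⟨(hpick A₀ hA₀).choose⟩
    choose! f hfA hfV using hpick
    obtain ⟨x, -, hx⟩ := exists_lt_card_fiber_of_mul_lt_card_of_maps_to hfV
      (n := r ! * p ^ r) (lt_of_le_of_lt (by
        calc #(M.biUnion id) * (r ! * p ^ r) ≤ p * (r + 1) * (r ! * p ^ r) :=
              Nat.mul_le_mul_right _ hV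
          _ = (r + 1)! * p ^ (r + 1) := by rw [Nat.factorial_succ]; ring) hcard)
    set Sx := {A ∈ S | f A = x}
    have hxSx : ∀ A ∈ Sx, x ∈ A := fun A hA => by
      obtain ⟨hAS, rfl⟩ := mem_filter.mp hA
      exact hfA A hAS
    obtain ⟨T, hTSx, hT⟩ := exists_isSunflower_of_link hxSx (ih _
      (fun B hB => by
        obtain ⟨A, hA, rfl⟩ := mem_image.mp hB
        rw [card_erase_of_mem (hxSx A hA), hS A (mem_filter.mp hA).1]; rfl)
      (by rwa [card_image_of_injOn fun A hA B hB => erase_injOn' x (hxSx A hA) (hxSx B hB)]))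
    exact ⟨T, hTSx.trans (filter_subset _ _), hT⟩

end Finset

theorem Nat.choose_add_le (n m j : ℕ) :
    (n + m).choose (j + 1) ≤ n.choose (j + 1) + m * (n + m).choose j := by
  induction m with
  | zero => simp
  | succ m ih =>
    have hmono := Nat.choose_le_succ (n + m) j
    calc (n + (m + 1)).choose (j + 1) = (n + m).choose j + (n + m).choose (j + 1) :=
          Nat.choose_succ_succ' (n + m) j
      _ ≤ (n + m + 1).choose j + (n.choose (j + 1) + m * (n + m + 1).choose j) :=
          add_le_add hmono (ih.trans (by gcongr))
      _ = n.choose (j + 1) + (m + 1) * (n + (m + 1)).choose j := by ring_nf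

/-- At most `r` of the disjoint sets `C = A ∩ B` lie in a given `A`, and by the sunflower lemma at
most `r! (r+1)^r` distinct such `A` occur. -/
theorem card_le_of_pairwiseDisjoint_of_forall_eq_inter {𝒜 𝒞 : Finset (Finset ℕ)} {r : ℕ}
    (h𝒜 : ∀ A ∈ 𝒜, #A = r) (hint : IsIntersecting 𝒜)
    (hdisj : (𝒞 : Set (Finset ℕ)).PairwiseDisjoint id)
    (h𝒞 : ∀ C ∈ 𝒞, ∃ A ∈ 𝒜, ∃ B ∈ 𝒜, A ∩ B = C) :
    #𝒞 ≤ r * (r ! * (r + 1) ^ r) := by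
  choose! a ha b hb hab using h𝒞
  have hC_sub : ∀ C ∈ 𝒞, C ⊆ a C := fun C hC => (hab C hC).symm.le.trans inter_subset_left
  have hfiber : ∀ A ∈ 𝒞.image a, #{C ∈ 𝒞 | a C = A} ≤ r := by
    intro A hA
    obtain ⟨C₀, hC₀, rfl⟩ := mem_image.mp hA
    rw [← h𝒜 _ (ha C₀ hC₀)]
    refine card_le_card_of_pairwiseDisjoint_of_inter_nonempty
      (hdisj.subset (coe_subset.mpr (filter_subset _ _))) fun C hC => ?_
    obtain ⟨hC, hCA⟩ := mem_filter.mp hC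
    rw [← hCA, id, inter_eq_right.mpr (hC_sub C hC), ← hab C hC]
    exact hint _ (ha C hC) _ (hb C hC)
  suffices #(𝒞.image a) ≤ r ! * (r + 1) ^ r from
    (card_le_mul_card_image 𝒞 r hfiber).trans (Nat.mul_le_mul_left r this)
  by_contra! hbig
  obtain ⟨𝒯, h𝒯, hr𝒯, Y, hY⟩ := exists_isSunflower (r + 1) r (𝒞.image a)
    (fun A hA => by obtain ⟨C, hC, rfl⟩ := mem_image.mp hA; exact h𝒜 _ (ha C hC)) hbig
  have h𝒯𝒜 : ∀ A ∈ 𝒯, A ∈ 𝒜 := fun A hA => by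
    obtain ⟨C, hC, rfl⟩ := mem_image.mp (h𝒯 hA); exact ha C hC
  obtain ⟨A₀, hA₀⟩ : 𝒯.Nonempty := card_pos.mp (by omega)
  have hYA : ∀ A ∈ 𝒯, Y ⊆ A := fun A hA => hY.kernel_subset (by omega) hA
  -- the sets of `𝒞` generated by the petals all meet the kernel, which has at most `r` points
  set 𝒞' := {C ∈ 𝒞 | a C ∈ 𝒯}
  have hmeet : ∀ C ∈ 𝒞', (Y ∩ id C).Nonempty := by
    intro C hC
    obtain ⟨hC, hC𝒯⟩ := mem_filter.mp hC
    obtain ⟨y, hy⟩ := hY.inter_kernel_nonempty (B := b C) (by rw [h𝒜 _ (hb C hC)]; omega)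
      fun A hA => hint _ (hb C hC) _ (h𝒯𝒜 A hA)
    refine ⟨y, mem_inter.mpr ⟨(mem_inter.mp hy).2, ?_⟩⟩
    rw [id, ← hab C hC]
    exact mem_inter.mpr ⟨hYA _ hC𝒯 (mem_inter.mp hy).2, (mem_inter.mp hy).1⟩
  have h𝒯_le : #𝒯 ≤ #𝒞' := calc
    #𝒯 ≤ #(𝒞'.image a) := card_le_card fun A hA => by
      obtain ⟨C, hC, rfl⟩ := mem_image.mp (h𝒯 hA)
      exact mem_image_of_mem a (mem_filter.mpr ⟨hC, hA⟩)
    _ ≤ #𝒞' := card_image_le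
  have h𝒞'_le : #𝒞' ≤ #Y := card_le_card_of_pairwiseDisjoint_of_inter_nonempty
    (hdisj.subset (coe_subset.mpr (filter_subset _ _))) hmeet
  have hY_le : #Y ≤ r := h𝒜 _ (h𝒯𝒜 A₀ hA₀) ▸ card_le_card (hYA A₀ hA₀)
  omega

def coverBound (r : ℕ) : ℕ := r * (r * (r ! * (r + 1) ^ r))

theorem exists_cover_of_isIntersecting {𝒜 : Finset (Finset ℕ)} {r : ℕ}
    (h𝒜 : ∀ A ∈ 𝒜, #A = r) (hint : IsIntersecting 𝒜) :
    ∃ S : Finset ℕ, #S ≤ coverBound r ∧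
      ∀ A ∈ 𝒜, ∀ B ∈ 𝒜, #(A ∩ B) < r → (A ∩ B ∩ S).Nonempty := by
  set P := ((𝒜 ×ˢ 𝒜).image fun p => p.1 ∩ p.2).filter (#· < r)
  have hP : ∀ C ∈ P, (∃ A ∈ 𝒜, ∃ B ∈ 𝒜, A ∩ B = C) ∧ #C < r := by
    simp only [P, mem_filter, mem_image, mem_product]
    rintro C ⟨⟨⟨A, B⟩, ⟨hA, hB⟩, rfl⟩, hlt⟩
    exact ⟨⟨A, hA, B, hB, rfl⟩, hlt⟩
  obtain ⟨𝒞, h𝒞P, hdisj, hmeet⟩ := exists_pairwiseDisjoint_meeting_all P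
  refine ⟨𝒞.biUnion id, ?_, fun A hA B hB hAB => ?_⟩
  · calc #(𝒞.biUnion id) ≤ #𝒞 * r :=
          card_biUnion_le_card_mul _ _ _ fun C hC => (hP C (h𝒞P hC)).2.le
      _ ≤ r * (r ! * (r + 1) ^ r) * r := Nat.mul_le_mul_right r
          (card_le_of_pairwiseDisjoint_of_forall_eq_inter h𝒜 hint hdisj
            fun C hC => (hP C (h𝒞P hC)).1)
      _ = coverBound r := by rw [coverBound]; ring
  · have hABP : A ∩ B ∈ P :=
      mem_filter.mpr ⟨mem_image.mpr ⟨(A, B), mem_product.mpr ⟨hA, hB⟩, rfl⟩, hAB⟩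
    rw [← not_disjoint_iff_nonempty_inter]
    exact hmeet _ hABP (hint A hA B hB)

theorem mem_ksets {n r : ℕ} {A : Finset ℕ} : A ∈ ksets n r ↔ A ⊆ grd n ∧ #A = r :=
  mem_powersetCard

theorem card_ksets (n r : ℕ) : #(ksets n r) = n.choose r := by
  simp [ksets, grd]

theorem mem_interk {𝒜 : Finset (Finset ℕ)} {k : ℕ} {C : Finset ℕ} :
    C ∈ interk 𝒜 k ↔ (∃ A ∈ 𝒜, ∃ B ∈ 𝒜, A ∩ B = C) ∧ #C = k := by
  simp [interk, and_assoc]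

theorem interk_subset_ksets {𝒜 : Finset (Finset ℕ)} {n r : ℕ} (h𝒜 : 𝒜 ⊆ ksets n r) (k : ℕ) :
    interk 𝒜 k ⊆ ksets n k := fun C hC => by
  obtain ⟨⟨A, hA, B, -, rfl⟩, hk⟩ := mem_interk.mp hC
  exact mem_ksets.mpr ⟨inter_subset_left.trans (mem_ksets.mp (h𝒜 hA)).1, hk⟩

theorem beta_bddAbove (n r k : ℕ) :
    BddAbove {m | ∃ 𝒜 ⊆ ksets n r, IsIntersecting 𝒜 ∧ #(interk 𝒜 k) = m} := by
  refine ⟨#(ksets n k), ?_⟩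
  rintro _ ⟨𝒜, h𝒜, -, rfl⟩
  exact card_le_card (interk_subset_ksets h𝒜 k)

theorem le_beta {n r k : ℕ} {𝒜 : Finset (Finset ℕ)} (h𝒜 : 𝒜 ⊆ ksets n r)
    (hint : IsIntersecting 𝒜) : #(interk 𝒜 k) ≤ beta n r k :=
  le_csSup (beta_bddAbove n r k) ⟨𝒜, h𝒜, hint, rfl⟩

theorem exists_card_interk_eq_beta (n r k : ℕ) :
    ∃ 𝒜 ⊆ ksets n r, IsIntersecting 𝒜 ∧ #(interk 𝒜 k) = beta n r k :=
  Nat.sSup_mem (s := {m | ∃ 𝒜 ⊆ ksets n r, IsIntersecting 𝒜 ∧ #(interk 𝒜 k) = m})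
    ⟨0, ∅, empty_subset _, by simp [IsIntersecting], by simp [interk]⟩ (beta_bddAbove n r k)

theorem beta_le {n r k m : ℕ}
    (h : ∀ 𝒜 ⊆ ksets n r, IsIntersecting 𝒜 → #(interk 𝒜 k) ≤ m) : beta n r k ≤ m := by
  obtain ⟨𝒜, h𝒜, hint, h𝒜k⟩ := exists_card_interk_eq_beta n r k
  exact h𝒜k ▸ h 𝒜 h𝒜 hint

theorem card_interk_one_le {𝒜 : Finset (Finset ℕ)} {r : ℕ} (h𝒜 : ∀ A ∈ 𝒜, #A = r)
    (hint : IsIntersecting 𝒜) : #(interk 𝒜 1) ≤ coverBound r + 1 := by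
  rcases Nat.lt_or_ge r 2 with hr | hr
  · -- two meeting sets of size at most one coincide, so `𝒜` has at most one member
    have h𝒜one : #𝒜 ≤ 1 := card_le_one.mpr fun A hA B hB => by
      have hAB := hint A hA B hB
      have hA' := eq_of_subset_of_card_le (inter_subset_left (s₂ := B))
        (by rw [h𝒜 A hA]; have := hAB.card_pos; omega)
      have hB' := eq_of_subset_of_card_le (inter_subset_right (s₁ := A))
        (by rw [h𝒜 B hB]; have := hAB.card_pos; omega)
      rw [← hA', hB']
    calc #(interk 𝒜 1) ≤ #(𝒜 ×ˢ 𝒜) := (card_filter_le _ _).trans card_image_le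
      _ ≤ coverBound r + 1 := by rw [card_product]; nlinarith
  · obtain ⟨S, hS, hScover⟩ := exists_cover_of_isIntersecting h𝒜 hint
    calc #(interk 𝒜 1) ≤ #(S.image singleton) := card_le_card fun C hC => by
          obtain ⟨⟨A, hA, B, hB, rfl⟩, h1⟩ := mem_interk.mp hC
          obtain ⟨x, hx⟩ := card_eq_one.mp h1
          obtain ⟨y, hy⟩ := hScover A hA B hB (by omega)
          rw [hx, mem_inter, mem_singleton] at hy
          exact mem_image.mpr ⟨x, hy.1 ▸ hy.2, hx.symm⟩
      _ ≤ coverBound r + 1 := card_image_le.trans (by omega)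

theorem beta_one_le (n r : ℕ) : beta n r 1 ≤ coverBound r + 1 :=
  beta_le fun _ h𝒜 hint => card_interk_one_le (fun _ hA => (mem_ksets.mp (h𝒜 hA)).2) hint

theorem alpha_bddAbove (r : ℕ) : BddAbove {m | ∃ n, r ≤ n ∧ beta n r 1 = m} :=
  ⟨coverBound r + 1, by rintro _ ⟨n, -, rfl⟩; exact beta_one_le n r⟩

theorem beta_one_le_alpha {n r : ℕ} (h : r ≤ n) : beta n r 1 ≤ alpha r :=
  le_csSup (alpha_bddAbove r) ⟨n, h, rfl⟩

theorem exists_beta_one_eq_alpha (r : ℕ) : ∃ n, r ≤ n ∧ beta n r 1 = alpha r :=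
  Nat.sSup_mem (s := {m | ∃ n, r ≤ n ∧ beta n r 1 = m}) ⟨_, r, le_rfl, rfl⟩ (alpha_bddAbove r)

def link (𝒜 : Finset (Finset ℕ)) (D : Finset ℕ) : Finset (Finset ℕ) :=
  {A ∈ 𝒜 | D ⊆ A}.image (· \ D)

section Link

variable {𝒜 : Finset (Finset ℕ)} {D : Finset ℕ}

theorem link_subset_ksets {n r : ℕ} (h𝒜 : 𝒜 ⊆ ksets n r) : link 𝒜 D ⊆ ksets n (r - #D) := by
  intro P hP
  obtain ⟨A, hA, rfl⟩ := mem_image.mp hP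
  obtain ⟨hA, hDA⟩ := mem_filter.mp hA
  obtain ⟨hAn, hAr⟩ := mem_ksets.mp (h𝒜 hA)
  exact mem_ksets.mpr ⟨sdiff_subset.trans hAn, by rw [card_sdiff_of_subset hDA, hAr]⟩

theorem sdiff_mem_interk_link {C : Finset ℕ} {k : ℕ} (hC : C ∈ interk 𝒜 k) (hDC : D ⊆ C) :
    C \ D ∈ interk (link 𝒜 D) (k - #D) := by
  obtain ⟨⟨A, hA, B, hB, rfl⟩, hk⟩ := mem_interk.mp hC
  refine mem_interk.mpr ⟨⟨A \ D, ?_, B \ D, ?_, inf_sdiff.symm⟩, ?_⟩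
  · exact mem_image_of_mem _ (mem_filter.mpr ⟨hA, hDC.trans inter_subset_left⟩)
  · exact mem_image_of_mem _ (mem_filter.mpr ⟨hB, hDC.trans inter_subset_right⟩)
  · rw [card_sdiff_of_subset hDC, hk]

theorem exists_inter_eq_of_not_isIntersecting_link (h : ¬IsIntersecting (link 𝒜 D)) :
    ∃ A ∈ 𝒜, ∃ B ∈ 𝒜, A ∩ B = D := by
  simp only [IsIntersecting, link, mem_image, mem_filter] at h
  push Not at h
  obtain ⟨_, ⟨A, ⟨hA, hDA⟩, rfl⟩, _, ⟨B, ⟨hB, hDB⟩, rfl⟩, hAB⟩ := h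
  refine ⟨A, hA, B, hB, ?_⟩
  rw [show A \ D ∩ (B \ D) = (A ∩ B) \ D from inf_sdiff.symm,
    sdiff_eq_empty_iff_subset] at hAB
  exact hAB.antisymm (subset_inter hDA hDB)

end Link

section UpperBound

variable {𝒜 : Finset (Finset ℕ)} {n r k : ℕ} {S : Finset ℕ}

theorem exists_isIntersecting_link
    (hS : ∀ A ∈ 𝒜, ∀ B ∈ 𝒜, #(A ∩ B) < r → (A ∩ B ∩ S).Nonempty) (hk : 0 < k)
    (hkr : k ≤ r) {C : Finset ℕ} (hC : C ∈ interk 𝒜 k) (hCS : #(C ∩ S) ≤ 1) :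
    ∃ D ⊆ C, #D = k - 1 ∧ IsIntersecting (link 𝒜 D) := by
  have hCk := (mem_interk.mp hC).2
  obtain ⟨D, hDCS, hD⟩ := exists_subset_card_eq (s := C \ S) (n := k - 1)
    (by have := card_sdiff_add_card_inter C S; omega)
  refine ⟨D, hDCS.trans sdiff_subset, hD, ?_⟩
  by_contra hDint
  obtain ⟨A, hA, B, hB, rfl⟩ := exists_inter_eq_of_not_isIntersecting_link hDint
  obtain ⟨x, hx⟩ := hS A hA B hB (by omega)
  rw [mem_inter] at hx
  exact (mem_sdiff.mp (hDCS hx.1)).2 hx.2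

theorem card_interk_le_of_cover (h𝒜 : 𝒜 ⊆ ksets n r)
    (hS : ∀ A ∈ 𝒜, ∀ B ∈ 𝒜, #(A ∩ B) < r → (A ∩ B ∩ S).Nonempty) (hk : 2 ≤ k) (hkr : k ≤ r)
    (hrn : r ≤ n) :
    #(interk 𝒜 k) ≤ alpha (r - k + 1) * n.choose (k - 1) + #S ^ 2 * n.choose (k - 2) := by
  classical
  set Good := {D ∈ ksets n (k - 1) | IsIntersecting (link 𝒜 D)}
  have hsplit : interk 𝒜 k ⊆ Good.biUnion (fun D => (interk (link 𝒜 D) 1).image (D ∪ ·)) ∪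
      {C ∈ (grd n).powersetCard (k - 2 + 2) | 1 < #(C ∩ S)} := by
    intro C hC
    have hCn : C ∈ ksets n k := interk_subset_ksets h𝒜 k hC
    rcases Nat.lt_or_ge 1 #(C ∩ S) with hCS | hCS
    · exact mem_union_right _ (mem_filter.mpr ⟨by rwa [Nat.sub_add_cancel hk], hCS⟩)
    obtain ⟨D, hDC, hD, hDint⟩ := exists_isIntersecting_link hS (by omega) hkr hC hCS
    refine mem_union_left _ (mem_biUnion.mpr ⟨D, mem_filter.mpr ⟨?_, hDint⟩, ?_⟩)
    · exact mem_ksets.mpr ⟨hDC.trans (mem_ksets.mp hCn).1, hD⟩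
    · refine mem_image.mpr ⟨C \ D, ?_, union_sdiff_of_subset hDC⟩
      have := sdiff_mem_interk_link hC hDC
      rwa [hD, show k - (k - 1) = 1 by omega] at this
  have hgood : ∀ D ∈ Good, #(interk (link 𝒜 D) 1) ≤ alpha (r - k + 1) := by
    intro D hD
    obtain ⟨hDn, hDint⟩ := mem_filter.mp hD
    have hlink := link_subset_ksets (D := D) h𝒜
    rw [(mem_ksets.mp hDn).2, show r - (k - 1) = r - k + 1 by omega] at hlink
    exact (le_beta hlink hDint).trans (beta_one_le_alpha (by omega))
  calc #(interk 𝒜 k)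
      ≤ #Good * alpha (r - k + 1) + #S ^ 2 * n.choose (k - 2) := by
        refine (card_le_card hsplit).trans ((card_union_le _ _).trans (add_le_add ?_ ?_))
        · exact card_biUnion_le_card_mul _ _ _ fun D hD => card_image_le.trans (hgood D hD)
        · simpa [grd] using card_powersetCard_filter_one_lt_card_inter_le (grd n) S (k - 2)
    _ ≤ alpha (r - k + 1) * n.choose (k - 1) + #S ^ 2 * n.choose (k - 2) := by
        have : #Good ≤ n.choose (k - 1) := card_ksets n (k - 1) ▸ card_filter_le _ _
        nlinarith

end UpperBound

theorem beta_le_alpha_mul_choose_add {n r k : ℕ} (hk : 2 ≤ k) (hkr : k ≤ r) (hrn : r ≤ n) :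
    beta n r k ≤ alpha (r - k + 1) * n.choose (k - 1) + coverBound r ^ 2 * n.choose (k - 2) :=
  beta_le fun 𝒜 h𝒜 hint => by
    obtain ⟨S, hS, hScover⟩ := exists_cover_of_isIntersecting
      (fun A hA => (mem_ksets.mp (h𝒜 hA)).2) hint
    exact (card_interk_le_of_cover h𝒜 hScover hk hkr hrn).trans (by gcongr)

def glue (ℬ 𝒯 : Finset (Finset ℕ)) : Finset (Finset ℕ) :=
  (ℬ ×ˢ 𝒯).image fun p => p.1 ∪ p.2

theorem card_interk_mul_card_le_card_interk_glue {ℬ 𝒯 : Finset (Finset ℕ)} {X Y : Finset ℕ}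
    {i j : ℕ} (hXY : Disjoint X Y) (hℬ : ∀ B ∈ ℬ, B ⊆ X) (h𝒯 : ∀ E ∈ 𝒯, E ⊆ Y ∧ #E = j) :
    #(interk ℬ i) * #𝒯 ≤ #(interk (glue ℬ 𝒯) (i + j)) := by
  have hC : ∀ C ∈ interk ℬ i, C ⊆ X := fun C hC => by
    obtain ⟨⟨B, hB, B', -, rfl⟩, -⟩ := mem_interk.mp hC
    exact inter_subset_left.trans (hℬ B hB)
  rw [← card_product]
  refine card_le_card_of_injOn (fun p => p.1 ∪ p.2) (fun p hp => ?_)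
    ((union_injOn_of_disjoint hXY).mono fun p hp => Set.mem_ofPred.mpr
      ⟨hC _ (mem_product.mp hp).1, (h𝒯 _ (mem_product.mp hp).2).1⟩)
  obtain ⟨C, E⟩ := p
  obtain ⟨hCℬ, hE⟩ := mem_product.mp hp
  obtain ⟨⟨B, hB, B', hB', hBB'⟩, hCi⟩ := mem_interk.mp hCℬ
  refine mem_interk.mpr ⟨⟨B ∪ E, mem_image.mpr ⟨(B, E), mem_product.mpr ⟨hB, hE⟩, rfl⟩,
    B' ∪ E, mem_image.mpr ⟨(B', E), mem_product.mpr ⟨hB', hE⟩, rfl⟩, ?_⟩, ?_⟩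
  · rw [← inter_union_distrib_right, hBB']
  · rw [card_union_of_disjoint (hXY.mono (hC C hCℬ) (h𝒯 E hE).1), hCi, (h𝒯 E hE).2]

theorem card_interk_one_mul_choose_le_beta {ℬ : Finset (Finset ℕ)} {m n r : ℕ} (j : ℕ)
    (hℬ : ℬ ⊆ ksets m r) (hℬint : IsIntersecting ℬ) (hmn : m ≤ n) :
    #(interk ℬ 1) * (n - m).choose j ≤ beta n (r + j) (j + 1) := by
  set T := (Icc (m + 1) n).powersetCard j
  have hdisj : Disjoint (grd m) (Icc (m + 1) n) := by
    rw [grd, disjoint_left]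
    intro x hx hx'
    simp only [mem_Icc] at hx hx'
    omega
  have hglue : glue ℬ T ⊆ ksets n (r + j) := by
    intro A hA
    obtain ⟨⟨B, E⟩, hp, rfl⟩ := mem_image.mp hA
    obtain ⟨hBm, hBr⟩ := mem_ksets.mp (hℬ (mem_product.mp hp).1)
    obtain ⟨hE, hEj⟩ := mem_powersetCard.mp (mem_product.mp hp).2
    refine mem_ksets.mpr ⟨union_subset (hBm.trans ?_) (hE.trans ?_), ?_⟩
    · exact Icc_subset_Icc_right hmn
    · exact Icc_subset_Icc_left (Nat.le_add_left 1 m)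
    · rw [card_union_of_disjoint (hdisj.mono hBm hE), hBr, hEj]
  have hglue_int : IsIntersecting (glue ℬ T) := by
    simp only [IsIntersecting, glue, mem_image, mem_product]
    rintro _ ⟨⟨B, E⟩, ⟨hB, -⟩, rfl⟩ _ ⟨⟨B', E'⟩, ⟨hB', -⟩, rfl⟩
    exact (hℬint B hB B' hB').mono (inter_subset_inter subset_union_left subset_union_left)
  calc #(interk ℬ 1) * (n - m).choose j = #(interk ℬ 1) * #T := by
        rw [card_powersetCard, Nat.card_Icc, Nat.add_sub_add_right]
    _ ≤ #(interk (glue ℬ T) (1 + j)) := card_interk_mul_card_le_card_interk_glue hdisj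
        (fun B hB => (mem_ksets.mp (hℬ hB)).1) fun E hE => mem_powersetCard.mp hE
    _ ≤ beta n (r + j) (j + 1) := add_comm 1 j ▸ le_beta hglue hglue_int

theorem alpha_mul_choose_le_beta_add {m n r k : ℕ} (hk : 2 ≤ k) (hkr : k ≤ r)
    (hm : beta m (r - k + 1) 1 = alpha (r - k + 1)) (hmn : m ≤ n) :
    alpha (r - k + 1) * n.choose (k - 1) ≤
      beta n r k + alpha (r - k + 1) * m * n.choose (k - 2) := by
  obtain ⟨ℬ, hℬ, hℬint, hℬα⟩ := exists_card_interk_eq_beta m (r - k + 1) 1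
  have hlower := card_interk_one_mul_choose_le_beta (k - 1) hℬ hℬint hmn
  rw [hℬα, hm, show r - k + 1 + (k - 1) = r by omega, show k - 1 + 1 = k by omega] at hlower
  have hshift := Nat.choose_add_le (n - m) m (k - 2)
  rw [Nat.sub_add_cancel hmn, show k - 2 + 1 = k - 1 by omega] at hshift
  calc alpha (r - k + 1) * n.choose (k - 1)
      ≤ alpha (r - k + 1) * ((n - m).choose (k - 1) + m * n.choose (k - 2)) :=
        Nat.mul_le_mul_left _ hshift
    _ ≤ beta n r k + alpha (r - k + 1) * m * n.choose (k - 2) := by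
        rw [mul_add, ← mul_assoc]
        exact Nat.add_le_add_right hlower _

/-- Asymptotics: `β(n,r,k) = α^(r-k+1)·C(n,k-1) + O(n^(k-2))` for fixed `2 ≤ k ≤ r`. -/
theorem stmt_3 (k r : ℕ) (hk : 2 ≤ k) (hkr : k ≤ r) :
    ∃ c : ℝ, 0 < c ∧ ∃ n₀ : ℕ, ∀ n, n₀ ≤ n →
      |(beta n r k : ℝ) - (alpha (r - k + 1) : ℝ) * (n.choose (k - 1) : ℝ)| ≤
        c * (n : ℝ) ^ ((k : ℤ) - 2) := by
  obtain ⟨m, -, hm⟩ := exists_beta_one_eq_alpha (r - k + 1)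
  refine ⟨alpha (r - k + 1) * m + coverBound r ^ 2 + 1, by positivity, max r m, fun n hn => ?_⟩
  have hupper : (beta n r k : ℝ) ≤
      alpha (r - k + 1) * n.choose (k - 1) + coverBound r ^ 2 * n.choose (k - 2) := by
    exact_mod_cast beta_le_alpha_mul_choose_add hk hkr (le_of_max_le_left hn)
  have hlower : (alpha (r - k + 1) : ℝ) * n.choose (k - 1) ≤
      beta n r k + alpha (r - k + 1) * m * n.choose (k - 2) := by
    exact_mod_cast alpha_mul_choose_le_beta_add hk hkr hm (le_of_max_le_right hn)
  have hpow : (n.choose (k - 2) : ℝ) ≤ (n : ℝ) ^ (k - 2) := by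
    exact_mod_cast Nat.choose_le_pow n (k - 2)
  rw [show (n : ℝ) ^ ((k : ℤ) - 2) = (n : ℝ) ^ (k - 2) by
    rw [show (k : ℤ) - 2 = ((k - 2 : ℕ) : ℤ) by omega, zpow_natCast]]
  have hN : (0 : ℝ) ≤ (n : ℝ) ^ (k - 2) := by positivity
  have hs : (0 : ℝ) ≤ coverBound r ^ 2 := by positivity
  have ham : (0 : ℝ) ≤ alpha (r - k + 1) * m := by positivity
  refine abs_sub_le_iff.mpr ⟨?_, ?_⟩ <;>
    linarith [mul_le_mul_of_nonneg_left hpow hs, mul_le_mul_of_nonneg_left hpow ham,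
      mul_nonneg hs hN, mul_nonneg ham hN]
end

section
/- Let r ≥ 4. There exist n ≥ r and an intersecting family 𝒜 ⊆ [n]^(r) with |𝒜⟨1⟩| ≥ 2·C(2r−4, r−2) + 2r − 4, where C(·,·) denotes the binomial coefficient. In particular α^(r) ≥ 2·C(2r−4, r−2) + 2r − 4. (Such a family is obtained by pairing the (r−2)-subsets of [2r−4] into complementary pairs (A_i, B_i), i = 1,…,m with m = C(2r−4,r−2)/2, introducing four new vertices a_i, b_i, c_i, d_i for each i, and taking the r-sets A_i∪{a_i,b_i}, A_i∪{c_i,d_i}, B_i∪{a_i,c_i}, B_i∪{b_i,d_i}.) -/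
open Finset

/-!
For the construction put `k = r - 2` and let `G` be a `2k`-set. Its `k`-subsets come in
complementary pairs `{T, G \ T}`; each pair gets four new vertices forming a `2 × 2` grid, and
the family consists of `T` extended by either row and `G \ T` extended by either column. Two
members meet inside `G` unless their bases are complementary, and then they meet in exactly one
grid vertex. So all `4 · C(2k, k) / 2` grid vertices, and every `x ∈ G` (as `T ∩ U = {x}` for
suitable `k`-sets), are singleton intersections.

For the bound on `α^(r)`: `β` and `α` are suprema in `ℕ`, so they need bounded index sets. If
`{x₀} = A₀ ∩ B₀` with `Y ⊆ A₀` and `x₀ ∉ Y`, then every other witness `A ⊇ Y` of a singleton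
intersection meets `B₀` in a point `z ∉ Y`; so the points with such a witness are among the at
most `r` choices of `z` and the points with a witness containing `Y ∪ {z}`. Iterating `r` times
gives `|𝒜⟨1⟩| < (r + 1) ^ r`.
-/

theorem mem_interPts {𝒜 : Finset (Finset ℕ)} {x : ℕ} :
    x ∈ interPts 𝒜 ↔ ∃ A ∈ 𝒜, ∃ B ∈ 𝒜, A ∩ B = {x} := by
  simp only [interPts, interk, mem_sup, mem_filter, mem_image, mem_product, id, card_eq_one]
  constructor
  · rintro ⟨_, ⟨⟨⟨A, B⟩, ⟨hA, hB⟩, rfl⟩, a, hAB⟩, hx⟩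
    obtain rfl : x = a := by simpa [hAB] using hx
    exact ⟨A, hA, B, hB, hAB⟩
  · rintro ⟨A, hA, B, hB, hAB⟩
    exact ⟨_, ⟨⟨(A, B), ⟨hA, hB⟩, rfl⟩, x, hAB⟩, by simp [hAB]⟩

theorem interk_one_eq_map (𝒜 : Finset (Finset ℕ)) :
    interk 𝒜 1 = (interPts 𝒜).map ⟨singleton, singleton_injective⟩ := by
  ext C
  simp only [interk, mem_filter, mem_image, mem_product, card_eq_one, mem_map, mem_interPts]
  constructor
  · rintro ⟨⟨⟨A, B⟩, ⟨hA, hB⟩, rfl⟩, x, hAB⟩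
    exact ⟨x, ⟨A, hA, B, hB, hAB⟩, hAB.symm⟩
  · rintro ⟨x, ⟨A, hA, B, hB, hAB⟩, rfl⟩
    exact ⟨⟨(A, B), ⟨hA, hB⟩, hAB⟩, x, rfl⟩

theorem card_interk_one (𝒜 : Finset (Finset ℕ)) : #(interk 𝒜 1) = #(interPts 𝒜) := by
  rw [interk_one_eq_map, card_map]

theorem isIntersecting_iff {𝒜 : Finset (Finset ℕ)} :
    IsIntersecting 𝒜 ↔ (𝒜 : Set (Finset ℕ)).Intersecting := by
  simp [IsIntersecting, Set.Intersecting, not_disjoint_iff_nonempty_inter]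

theorem sized_of_subset_ksets {𝒜 : Finset (Finset ℕ)} {n r : ℕ} (h𝒜 : 𝒜 ⊆ ksets n r) :
    (𝒜 : Set (Finset ℕ)).Sized r :=
  fun _ hA => (mem_powersetCard.mp (h𝒜 hA)).2

section HalfSets

variable {α : Type*} [DecidableEq α] {G T U : Finset α} {k : ℕ}

theorem eq_sdiff_of_disjoint (hG : #G = 2 * k) (hT : T ∈ G.powersetCard k)
    (hU : U ∈ G.powersetCard k) (h : Disjoint T U) : U = G \ T := by
  rw [mem_powersetCard] at hT hU
  refine eq_of_subset_of_card_le (subset_sdiff.mpr ⟨hU.1, h.symm⟩) ?_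
  rw [card_sdiff_of_subset hT.1, hG, hT.2, hU.2]
  omega

theorem exists_inter_eq_singleton (hG : #G = 2 * k) (hk : 1 ≤ k) {x : α} (hx : x ∈ G) :
    ∃ T ∈ G.powersetCard k, ∃ U ∈ G.powersetCard k, T ∩ U = {x} := by
  have hGx : #(G.erase x) = 2 * k - 1 := by rw [card_erase_of_mem hx, hG]
  obtain ⟨S, hS, hSc⟩ := exists_subset_card_eq (show k - 1 ≤ #(G.erase x) by omega)
  obtain ⟨S', hS', hS'c⟩ :=
    exists_subset_card_eq (show k - 1 ≤ #(G.erase x \ S) by rw [card_sdiff_of_subset hS]; omega)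
  have hxS : x ∉ S := fun h => notMem_erase x G (hS h)
  have hxS' : x ∉ S' := fun h => notMem_erase x G (sdiff_subset (hS' h))
  refine ⟨insert x S, mem_powersetCard.mpr ⟨insert_subset hx (hS.trans (erase_subset x G)), ?_⟩,
    insert x S', mem_powersetCard.mpr ⟨insert_subset hx ((hS'.trans sdiff_subset).trans
      (erase_subset x G)), ?_⟩, ?_⟩
  · rw [card_insert_of_notMem hxS, hSc]; omega
  · rw [card_insert_of_notMem hxS', hS'c]; omega
  · rw [← insert_inter_distrib, disjoint_iff_inter_eq_empty.mp
      (disjoint_of_subset_right hS' disjoint_sdiff), insert_empty]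

end HalfSets

namespace Tuza

section Construction

variable {α : Type*} [DecidableEq α] (G : Finset α) {T U : Finset α}

-- The grid vertex shared by block `i` of `T` and block `j` of `G \ T`; being an unordered pair,
-- it is symmetric under `(T, i, j) ↦ (G \ T, j, i)`.
def cell (T : Finset α) (i j : Bool) : Sym2 (Finset α × Bool) := s((T, i), (G \ T, j))

def block (T : Finset α) (i : Bool) : Finset (α ⊕ Sym2 (Finset α × Bool)) :=
  T.disjSum (univ.image (cell G T i))

def family (k : ℕ) : Finset (Finset (α ⊕ Sym2 (Finset α × Bool))) :=
  (G.powersetCard k ×ˢ univ).image fun p => block G p.1 p.2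

def cells (k : ℕ) : Finset (Sym2 (Finset α × Bool)) :=
  (G.powersetCard k ×ˢ univ ×ˢ univ).image fun p => cell G p.1 p.2.1 p.2.2

variable {G}

theorem cell_sdiff (hT : T ⊆ G) (i j : Bool) : cell G (G \ T) j i = cell G T i j := by
  rw [cell, cell, Finset.sdiff_sdiff_eq_self hT, Sym2.eq_swap]

theorem eq_of_cell_eq_cell {i j a b : Bool} (h : cell G U a b = cell G T i j) :
    (U = T ∧ a = i ∧ b = j) ∨ (U = G \ T ∧ a = j ∧ b = i) := by
  simp only [cell, Sym2.eq_iff, Prod.mk.injEq] at h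
  tauto

theorem cell_injective (T : Finset α) (i : Bool) : Function.Injective (cell G T i) :=
  fun _ _ h => (Prod.mk.inj (Sym2.congr_right.mp (h : s((T, i), _) = s((T, i), _)))).2

theorem card_block (T : Finset α) (i : Bool) : #(block G T i) = #T + 2 := by
  rw [block, card_disjSum, card_image_of_injective _ (cell_injective T i), card_univ,
    Fintype.card_bool]

theorem mem_block_of_mem (i : Bool) {x : α} (hx : x ∈ T) : Sum.inl x ∈ block G T i :=
  inl_mem_disjSum.mpr hx

theorem cell_mem_block (i j : Bool) : Sum.inr (cell G T i j) ∈ block G T i :=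
  inr_mem_disjSum.mpr (mem_image_of_mem _ (mem_univ j))

theorem mem_block {i : Bool} {c : Sym2 (Finset α × Bool)} :
    Sum.inr c ∈ block G T i ↔ ∃ j, cell G T i j = c := by
  simp only [block, inr_mem_disjSum, mem_image, mem_univ, true_and]

theorem block_inter_block_sdiff (hT : T ⊆ G) (hT₀ : T.Nonempty) (i j : Bool) :
    block G T i ∩ block G (G \ T) j = {Sum.inr (cell G T i j)} := by
  refine eq_singleton_iff_unique_mem.mpr
    ⟨mem_inter.mpr ⟨cell_mem_block i j, cell_sdiff hT i j ▸ cell_mem_block j i⟩, ?_⟩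
  rintro (x | c) hc <;> obtain ⟨h₁, h₂⟩ := mem_inter.mp hc
  · exact absurd (inl_mem_disjSum.mp h₂) (notMem_sdiff_of_mem_right (inl_mem_disjSum.mp h₁))
  · obtain ⟨a, rfl⟩ := mem_block.mp h₁
    obtain ⟨b, hb⟩ := mem_block.mp h₂
    rcases eq_of_cell_eq_cell hb with ⟨hTT, -⟩ | ⟨-, rfl, rfl⟩
    · obtain ⟨x, hx⟩ := hT₀
      exact absurd (hTT ▸ hx) (notMem_sdiff_of_mem_right hx)
    · rfl

theorem block_inter_block_of_inter_eq_singleton {x : α} (h : T ∩ U = {x}) :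
    block G T false ∩ block G U true = {Sum.inl x} := by
  obtain ⟨hxT, hxU⟩ := mem_inter.mp (h ▸ mem_singleton_self x)
  refine eq_singleton_iff_unique_mem.mpr
    ⟨mem_inter.mpr ⟨mem_block_of_mem _ hxT, mem_block_of_mem _ hxU⟩, ?_⟩
  rintro (y | c) hc <;> obtain ⟨h₁, h₂⟩ := mem_inter.mp hc
  · simpa [h] using mem_inter.mpr ⟨inl_mem_disjSum.mp h₁, inl_mem_disjSum.mp h₂⟩
  · obtain ⟨a, rfl⟩ := mem_block.mp h₁
    obtain ⟨b, hb⟩ := mem_block.mp h₂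
    obtain ⟨-, ⟨⟩, -⟩ | ⟨rfl, -⟩ := eq_of_cell_eq_cell hb
    exact absurd hxU (notMem_sdiff_of_mem_right hxT)

end Construction

section Family

variable {α : Type*} [DecidableEq α] {G T : Finset α} {k : ℕ}

theorem mem_family {A : Finset (α ⊕ Sym2 (Finset α × Bool))} :
    A ∈ family G k ↔ ∃ T ∈ G.powersetCard k, ∃ i, block G T i = A := by
  simp [family]

theorem block_mem_family (hT : T ∈ G.powersetCard k) (i : Bool) :
    block G T i ∈ family G k :=
  mem_family.mpr ⟨T, hT, i, rfl⟩

theorem sized_family : (family G k : Set (Finset (α ⊕ Sym2 (Finset α × Bool)))).Sized (k + 2) := by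
  intro A hA
  obtain ⟨T, hT, i, rfl⟩ := mem_family.mp hA
  rw [card_block, (mem_powersetCard.mp hT).2]

theorem intersecting_family (hG : #G = 2 * k) :
    (family G k : Set (Finset (α ⊕ Sym2 (Finset α × Bool)))).Intersecting := by
  intro A hA B hB
  obtain ⟨T, hT, i, rfl⟩ := mem_family.mp hA
  obtain ⟨U, hU, j, rfl⟩ := mem_family.mp hB
  by_cases hTU : Disjoint T U
  · obtain rfl := eq_sdiff_of_disjoint hG hT hU hTU
    exact not_disjoint_iff.mpr ⟨_, cell_mem_block i j,
      cell_sdiff (mem_powersetCard.mp hT).1 i j ▸ cell_mem_block j i⟩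
  · obtain ⟨x, hxT, hxU⟩ := not_disjoint_iff.mp hTU
    exact not_disjoint_iff.mpr ⟨_, mem_block_of_mem i hxT, mem_block_of_mem j hxU⟩

theorem exists_inter_eq_inl (hG : #G = 2 * k) (hk : 1 ≤ k) {x : α} (hx : x ∈ G) :
    ∃ A ∈ family G k, ∃ B ∈ family G k, A ∩ B = {Sum.inl x} := by
  obtain ⟨T, hT, U, hU, hTU⟩ := exists_inter_eq_singleton hG hk hx
  exact ⟨_, block_mem_family hT false, _, block_mem_family hU true,
    block_inter_block_of_inter_eq_singleton hTU⟩

theorem exists_inter_eq_inr_cell (hG : #G = 2 * k) (hk : 1 ≤ k) (hT : T ∈ G.powersetCard k)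
    (i j : Bool) :
    ∃ A ∈ family G k, ∃ B ∈ family G k, A ∩ B = {Sum.inr (cell G T i j)} := by
  obtain ⟨hTG, hTk⟩ := mem_powersetCard.mp hT
  have hTc : G \ T ∈ G.powersetCard k :=
    mem_powersetCard.mpr ⟨sdiff_subset, by rw [card_sdiff_of_subset hTG, hG, hTk]; omega⟩
  exact ⟨_, block_mem_family hT i, _, block_mem_family hTc j,
    block_inter_block_sdiff hTG (card_pos.mp (by omega)) i j⟩

theorem two_mul_choose_le_card_cells (hG : #G = 2 * k) : 2 * (2 * k).choose k ≤ #(cells G k) := by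
  -- By `eq_of_cell_eq_cell`, each fibre is contained in `{(T, i, j), (G \ T, j, i)}`.
  have h := card_le_mul_card_image (f := fun p : Finset α × Bool × Bool => cell G p.1 p.2.1 p.2.2)
      (G.powersetCard k ×ˢ univ ×ˢ univ) 2 fun c hc => by
    obtain ⟨⟨T, i, j⟩, -, rfl⟩ := mem_image.mp hc
    refine (card_le_card fun p hp => ?_).trans (card_le_two (a := (T, i, j)) (b := (G \ T, j, i)))
    obtain ⟨U, a, b⟩ := p
    have hUab : cell G U a b = cell G T i j := (mem_filter.mp hp).2
    rcases eq_of_cell_eq_cell hUab with ⟨rfl, rfl, rfl⟩ | ⟨rfl, rfl, rfl⟩ <;> simp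
  rw [card_product, card_product, card_powersetCard, hG, card_univ, Fintype.card_bool] at h
  rw [cells]
  omega

end Family

end Tuza

theorem exists_ksets_of_countable {V : Type*} [DecidableEq V] [Countable V]
    {𝒜 : Finset (Finset V)} {r : ℕ} (h𝒜 : (𝒜 : Set (Finset V)).Sized r)
    (hint : (𝒜 : Set (Finset V)).Intersecting) {X : Finset V}
    (hX : ∀ x ∈ X, ∃ A ∈ 𝒜, ∃ B ∈ 𝒜, A ∩ B = {x}) :
    ∃ n, r ≤ n ∧ ∃ ℬ ⊆ ksets n r, IsIntersecting ℬ ∧ #X ≤ #(interPts ℬ) := by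
  obtain ⟨f, hf⟩ := Countable.exists_injective_nat V
  -- shift by one so that the labels land in `[n] = {1, …, n}`
  let e : V ↪ ℕ := ⟨fun v => f v + 1, fun a b h => hf (by simpa using h)⟩
  set ℬ := 𝒜.image (map e)
  let n := r + ℬ.sup fun B => B.sup id
  refine ⟨n, le_self_add, ℬ, fun B hB => ?_, fun B hB C hC => ?_, ?_⟩
  · obtain ⟨A, hA, rfl⟩ := mem_image.mp hB
    refine mem_powersetCard.mpr ⟨fun y hy => ?_, by rw [card_map, h𝒜 hA]⟩
    obtain ⟨v, -, rfl⟩ := mem_map.mp hy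
    have hle : e v ≤ (A.map e).sup id := le_sup (f := id) hy
    have hle' : (A.map e).sup id ≤ ℬ.sup fun B => B.sup id := le_sup (f := fun B => B.sup id) hB
    exact mem_Icc.mpr ⟨Nat.succ_pos _, by omega⟩
  · obtain ⟨A, hA, rfl⟩ := mem_image.mp hB
    obtain ⟨A', hA', rfl⟩ := mem_image.mp hC
    rw [← map_inter, map_nonempty]
    exact not_disjoint_iff_nonempty_inter.mp (hint hA hA')
  · rw [← card_map e]
    refine card_le_card fun y hy => ?_
    obtain ⟨x, hx, rfl⟩ := mem_map.mp hy
    obtain ⟨A, hA, B, hB, hAB⟩ := hX x hx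
    exact mem_interPts.mpr ⟨_, mem_image_of_mem _ hA, _, mem_image_of_mem _ hB,
      by rw [← map_inter, hAB, map_singleton]⟩

theorem exists_intersecting_le_card_interPts {k : ℕ} (hk : 1 ≤ k) :
    ∃ n, k + 2 ≤ n ∧ ∃ 𝒜 ⊆ ksets n (k + 2), IsIntersecting 𝒜 ∧
      2 * (2 * k).choose k + 2 * k ≤ #(interPts 𝒜) := by
  set G := range (2 * k)
  have hG : #G = 2 * k := card_range _
  obtain ⟨n, hn, 𝒜, h𝒜, hint, hX⟩ := exists_ksets_of_countable (Tuza.sized_family (G := G))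
    (Tuza.intersecting_family hG) (X := G.disjSum (Tuza.cells G k)) <| by
      rintro (x | c) hx
      · exact Tuza.exists_inter_eq_inl hG hk (inl_mem_disjSum.mp hx)
      · obtain ⟨⟨T, i, j⟩, hp, rfl⟩ := mem_image.mp (inr_mem_disjSum.mp hx)
        exact Tuza.exists_inter_eq_inr_cell hG hk (mem_product.mp hp).1 i j
  refine ⟨n, hn, 𝒜, h𝒜, hint, le_trans ?_ hX⟩
  rw [card_disjSum, hG]
  have := Tuza.two_mul_choose_le_card_cells hG
  omega

section Branching

variable {α : Type*} [DecidableEq α] {𝒜 : Finset (Finset α)} {r : ℕ}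

theorem card_lt_of_forall_mem_inter_eq_singleton (h𝒜 : (𝒜 : Set (Finset α)).Sized r)
    (hint : (𝒜 : Set (Finset α)).Intersecting) (j : ℕ) {Y X : Finset α} (hY : r ≤ #Y + j)
    (hX : ∀ x ∈ X, x ∉ Y ∧ ∃ A ∈ 𝒜, ∃ B ∈ 𝒜, Y ⊆ A ∧ A ∩ B = {x}) :
    #X < (r + 1) ^ j := by
  induction j generalizing Y X with
  | zero =>
    suffices X = ∅ by simp [this]
    refine eq_empty_of_forall_notMem fun x hx => ?_
    obtain ⟨hxY, A, hA, B, -, hYA, hAB⟩ := hX x hx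
    have hAY : A = Y := (eq_of_subset_of_card_le hYA (by rw [h𝒜 hA]; omega)).symm
    exact hxY (hAY ▸ (mem_inter.mp (hAB ▸ mem_singleton_self x)).1)
  | succ j ih =>
    obtain rfl | ⟨x₀, hx₀⟩ := X.eq_empty_or_nonempty
    · simp
    obtain ⟨hx₀Y, A₀, hA₀, B₀, hB₀, hYA₀, hA₀B₀⟩ := hX x₀ hx₀
    set X' : α → Finset α := fun z =>
      {x ∈ X | x ≠ z ∧ ∃ A ∈ 𝒜, ∃ B ∈ 𝒜, insert z Y ⊆ A ∧ A ∩ B = {x}}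
    -- Any witness `A ⊇ Y` meets `B₀`, and only outside `Y`, since `A₀ ∩ B₀ = {x₀}` with `x₀ ∉ Y`.
    have hcover : X ⊆ (B₀ \ Y).biUnion fun z => insert z (X' z) := by
      intro x hx
      obtain ⟨hxY, A, hA, B, hB, hYA, hAB⟩ := hX x hx
      obtain ⟨z, hz⟩ := not_disjoint_iff_nonempty_inter.mp (hint hB₀ hA)
      have hzY : z ∉ Y := fun hzY => by
        have hz₀ : z ∈ A₀ ∩ B₀ := mem_inter.mpr ⟨hYA₀ hzY, (mem_inter.mp hz).1⟩
        rw [hA₀B₀, mem_singleton] at hz₀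
        exact hx₀Y (hz₀ ▸ hzY)
      refine mem_biUnion.mpr ⟨z, mem_sdiff.mpr ⟨(mem_inter.mp hz).1, hzY⟩, ?_⟩
      by_cases hxz : x = z
      · exact hxz ▸ mem_insert_self x _
      · exact mem_insert_of_mem <| mem_filter.mpr
          ⟨hx, hxz, A, hA, B, hB, insert_subset (mem_inter.mp hz).2 hYA, hAB⟩
    have hX' : ∀ z ∈ B₀ \ Y, #(insert z (X' z)) ≤ (r + 1) ^ j := by
      intro z hz
      refine (card_insert_le _ _).trans (ih (Y := insert z Y) ?_ fun x hx => ?_)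
      · rw [card_insert_of_notMem (mem_sdiff.mp hz).2]; omega
      · obtain ⟨hxX, hxz, hA⟩ := mem_filter.mp hx
        exact ⟨by simpa [hxz] using (hX x hxX).1, hA⟩
    have hB₀Y : #(B₀ \ Y) ≤ r := (card_le_card sdiff_subset).trans (h𝒜 hB₀).le
    calc #X ≤ #(B₀ \ Y) * (r + 1) ^ j :=
          (card_le_card hcover).trans (card_biUnion_le_card_mul _ _ _ hX')
      _ ≤ r * (r + 1) ^ j := Nat.mul_le_mul_right _ hB₀Y
      _ < (r + 1) * (r + 1) ^ j := Nat.mul_lt_mul_of_pos_right (by omega) (by positivity)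
      _ = (r + 1) ^ (j + 1) := (pow_succ' _ _).symm

end Branching

theorem card_interPts_lt {𝒜 : Finset (Finset ℕ)} {n r : ℕ} (h𝒜 : 𝒜 ⊆ ksets n r)
    (hint : IsIntersecting 𝒜) : #(interPts 𝒜) < (r + 1) ^ r :=
  card_lt_of_forall_mem_inter_eq_singleton (sized_of_subset_ksets h𝒜) (isIntersecting_iff.mp hint)
    r (Y := ∅) (by simp) fun x hx => by simpa using mem_interPts.mp hx

theorem card_interPts_le_alpha {𝒜 : Finset (Finset ℕ)} {n r : ℕ} (hn : r ≤ n)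
    (h𝒜 : 𝒜 ⊆ ksets n r) (hint : IsIntersecting 𝒜) : #(interPts 𝒜) ≤ alpha r := by
  have hbeta : ∀ m, (r + 1) ^ r ∈
      upperBounds {b | ∃ ℬ ⊆ ksets m r, IsIntersecting ℬ ∧ #(interk ℬ 1) = b} := by
    rintro m _ ⟨ℬ, hℬ, hℬint, rfl⟩
    exact (card_interk_one ℬ ▸ card_interPts_lt hℬ hℬint).le
  calc #(interPts 𝒜) = #(interk 𝒜 1) := (card_interk_one 𝒜).symm
    _ ≤ beta n r 1 := le_csSup ⟨_, hbeta n⟩ ⟨𝒜, h𝒜, hint, rfl⟩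
    _ ≤ alpha r := le_csSup ⟨(r + 1) ^ r, by rintro _ ⟨m, -, rfl⟩; exact csSup_le' (hbeta m)⟩
        ⟨n, hn, rfl⟩

/-- Tuza's lower bound: for `r ≥ 4` there is an intersecting family of `r`-sets with at least
`2·C(2r-4, r-2) + 2r - 4` singleton pairwise intersections; in particular
`α^(r) ≥ 2·C(2r-4, r-2) + 2r - 4`. -/
theorem stmt_10 (r : ℕ) (hr : 4 ≤ r) :
    (∃ n, r ≤ n ∧ ∃ 𝒜 ⊆ ksets n r, IsIntersecting 𝒜 ∧
      2 * (2 * r - 4).choose (r - 2) + 2 * r - 4 ≤ (interPts 𝒜).card) ∧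
    2 * (2 * r - 4).choose (r - 2) + 2 * r - 4 ≤ alpha r := by
  obtain ⟨k, rfl⟩ : ∃ k, r = k + 2 := ⟨r - 2, by omega⟩
  obtain ⟨n, hn, 𝒜, h𝒜, hint, hcard⟩ := exists_intersecting_le_card_interPts (k := k) (by omega)
  have hbound : 2 * (2 * (k + 2) - 4).choose (k + 2 - 2) + 2 * (k + 2) - 4 ≤ #(interPts 𝒜) := by
    rw [show 2 * (k + 2) - 4 = 2 * k by omega, Nat.add_sub_cancel]
    omega
  exact ⟨⟨n, hn, 𝒜, h𝒜, hint, hbound⟩, hbound.trans (card_interPts_le_alpha hn h𝒜 hint)⟩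
end
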